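/- Let m > 1 be an integer. Then there exists a surjective group homomorphism from the free product ℤ/2 ∗ D₂ onto the direct product ℤ/2 × D_m (a group of order 4m) whose kernel is torsion-free. -/

import Mathlib

/-!
Send the generator of `ℤ/2` to `(0, sr 0)`, and `r k, sr k ∈ D₂` to `(k, r 0)`, `(k, sr 1)`.
This is injective on both free factors, and it is onto because the image contains `(1, r 0)`,
`(0, sr 0)` and `(0, sr 1)`, and the reflections `sr 0, sr 1` generate `D_m` for every `m`.

In a free product every element of finite order is conjugate into a factor: a reduced word whose
first and last letters lie in different factors has infinite order (its powers are reduced words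
of growing length), and otherwise conjugating by the last letter merges it into the first, which
either shortens the word or leads back to the first case. A torsion
element of the kernel is therefore conjugate to an element of a factor that the map kills, which
is trivial by injectivity on the factors.
-/

open Monoid

/-- The old Mathlib `Monoid.IsTorsionFree` (removed since), with its original meaning. -/
def Monoid.IsTorsionFree (G : Type*) [Monoid G] : Prop :=
  ∀ g : G, g ≠ 1 → ¬IsOfFinOrder g

open Function DihedralGroup

theorem MonoidHom.isTorsionFree_ker_iff {G H : Type*} [Group G] [Group H] (f : G →* H) :
    IsTorsionFree f.ker ↔ ∀ x, f x = 1 → IsOfFinOrder x → x = 1 := by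
  refine ⟨fun h x hx hfin => ?_, fun h x hx1 hfin => hx1 (Subtype.ext ?_)⟩
  · by_contra hx1
    exact h ⟨x, hx⟩ (fun h1 => hx1 (congrArg Subtype.val h1)) (Submonoid.isOfFinOrder_coe.1 hfin)
  · exact h x x.2 (Submonoid.isOfFinOrder_coe.2 hfin)

namespace Monoid.CoprodI

variable {ι : Type*}

namespace Word

variable {M : ι → Type*} [∀ i, Monoid (M i)]

def lastIdx (w : Word M) : Option ι :=
  w.toList.getLast?.map Sigma.fst

theorem lastIdx_cons {i : ι} (m : M i) (w : Word M) (hmw : w.fstIdx ≠ some i) (h1 : m ≠ 1)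
    (hw : w ≠ empty) : (cons m w hmw h1).lastIdx = w.lastIdx := by
  have : w.toList ≠ [] := fun h => hw (Word.ext h)
  simp [lastIdx, cons, List.getLast?_cons, List.getLast?_eq_some_getLast this]

def ofInfix (w : Word M) {l : List (Σ i, M i)} (hl : l <:+: w.toList) : Word M where
  toList := l
  ne_one x hx := w.ne_one x (hl.subset hx)
  chain_ne := w.chain_ne.infix hl

theorem prod_ne_one {w : Word M} (hw : w ≠ empty) : w.prod ≠ 1 := by
  classical
  exact fun h => hw (equiv.symm.injective (h.trans prod_empty.symm))

end Word

variable {G : ι → Type*} [∀ i, Group (G i)]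

theorem NeWord.not_isOfFinOrder_prod {i j : ι} (w : NeWord G i j) (hij : i ≠ j) :
    ¬IsOfFinOrder w.prod := by
  have hpow (n : ℕ) : ∃ w' : NeWord G i j, w'.prod = w.prod ^ (n + 1) := by
    induction n with
    | zero => exact ⟨w, (pow_one _).symm⟩
    | succ n ih =>
      obtain ⟨w', hw'⟩ := ih
      exact ⟨w.append hij.symm w', by rw [append_prod, hw', ← pow_succ']⟩
  rw [isOfFinOrder_iff_pow_eq_one]
  rintro ⟨n, hn, hwn⟩
  obtain ⟨w', hw'⟩ := hpow (n - 1)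
  have hw'_ne : w'.toWord ≠ Word.empty := fun h => w'.toList_ne_nil (congrArg Word.toList h)
  exact Word.prod_ne_one hw'_ne (by rwa [← prod, hw', Nat.sub_add_cancel hn])

theorem Word.not_isOfFinOrder_prod_of_fstIdx_ne_lastIdx {w : Word G}
    (h : w.fstIdx ≠ w.lastIdx) : ¬IsOfFinOrder w.prod := by
  obtain ⟨i, j, w', rfl⟩ := NeWord.of_word w (by rintro rfl; exact h rfl)
  have hij : i ≠ j := by simpa [fstIdx, lastIdx, NeWord.toWord] using h
  exact w'.not_isOfFinOrder_prod hij

/-- Cyclic reduction: conjugating by the last letter `b` merges it into the first letter `a`. -/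
theorem Word.exists_isConj_middle_of_toList_eq {w : Word G} {i : ι} {a b : G i}
    {mid : List (Σ i, G i)} (hl : w.toList = ⟨i, a⟩ :: (mid ++ [⟨i, b⟩])) :
    ∃ u : Word G, u.toList = mid ∧ u ≠ empty ∧ u.fstIdx ≠ some i ∧ u.lastIdx ≠ some i ∧
      IsConj (of (b * a) * u.prod) w.prod := by
  have hchain := w.chain_ne
  rw [hl, ← List.singleton_append, ← List.append_assoc, List.isChain_append,
    List.isChain_append] at hchain
  obtain ⟨⟨-, -, hfst⟩, -, hlst⟩ := hchain
  have hmid : mid ≠ [] := by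
    rintro rfl
    exact hlst ⟨i, a⟩ rfl ⟨i, b⟩ rfl rfl
  let u := w.ofInfix (l := mid) (by rw [hl]; exact ⟨[⟨i, a⟩], [⟨i, b⟩], rfl⟩)
  refine ⟨u, rfl, fun h => hmid (congrArg toList h), fstIdx_ne_iff.2 (hfst _ rfl), ?_, ?_⟩
  · simpa [lastIdx, u, ofInfix, List.getLast?_eq_some_getLast hmid] using
      hlst (mid.getLast hmid) (by simp [List.getLast?_cons, List.getLast?_eq_some_getLast hmid])
        _ rfl
  · have hprod : w.prod = of a * u.prod * of b := by
      simp [prod, hl, u, ofInfix, mul_assoc]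
    exact isConj_iff.2 ⟨(of b)⁻¹, by rw [hprod, map_mul]; group⟩

theorem Word.exists_isConj_of_isOfFinOrder_prod (w : Word G) (hw : w ≠ empty)
    (hfin : IsOfFinOrder w.prod) : ∃ i, ∃ a : G i, IsConj (of a) w.prod := by
  induction hn : w.toList.length using Nat.strong_induction_on generalizing w with
  | _ n ih =>
  rcases hl : w.toList with _ | ⟨⟨i, a⟩, rest⟩
  · exact absurd (Word.ext hl) hw
  obtain rfl | ⟨mid, ⟨j, b⟩, rfl⟩ := rest.eq_nil_or_concat'
  · exact ⟨i, a, by simpa [prod, hl] using IsConj.refl (of a)⟩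
  obtain hij | rfl := ne_or_eq i j
  · exact absurd hfin (not_isOfFinOrder_prod_of_fstIdx_ne_lastIdx
      (by simp [fstIdx, lastIdx, hl, List.getLast?_cons, hij]))
  obtain ⟨u, hu, hu_ne, hu_fst, hu_lst, hconj⟩ := exists_isConj_middle_of_toList_eq hl
  by_cases hba : b * a = 1
  · rw [hba, map_one, one_mul] at hconj
    obtain ⟨k, c, hc⟩ := ih u.toList.length (by simp [← hn, hl, hu]) u hu_ne
      (hconj.symm.isOfFinOrder hfin) rfl
    exact ⟨k, c, hc.trans hconj⟩
  · rw [← prod_cons _ _ u hba hu_fst] at hconj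
    refine absurd (hconj.symm.isOfFinOrder hfin) (not_isOfFinOrder_prod_of_fstIdx_ne_lastIdx ?_)
    rw [fstIdx_cons, lastIdx_cons _ _ _ _ hu_ne]
    exact hu_lst.symm

theorem exists_isConj_of_isOfFinOrder {x : CoprodI G} (hfin : IsOfFinOrder x) (hx : x ≠ 1) :
    ∃ i, ∃ a : G i, IsConj (of a) x := by
  classical
  have hword : (Word.equiv x).prod = x := Word.equiv.symm_apply_apply x
  rw [← hword] at hfin ⊢
  exact (Word.equiv x).exists_isConj_of_isOfFinOrder_prod
    (fun h => hx (by rw [← hword, h, Word.prod_empty])) hfin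

theorem isTorsionFree_ker_lift {H : Type*} [Group H] {f : ∀ i, G i →* H}
    (hf : ∀ i, Injective (f i)) : IsTorsionFree (lift f).ker := by
  rw [MonoidHom.isTorsionFree_ker_iff]
  intro x hx hfin
  by_contra hx1
  obtain ⟨i, a, hconj⟩ := exists_isConj_of_isOfFinOrder hfin hx1
  have hfa : f i a = 1 := by simpa [hx] using (lift f).map_isConj hconj
  rw [(map_eq_one_iff (f i) (hf i)).1 hfa, map_one, isConj_one_right] at hconj
  exact hx1 hconj

end Monoid.CoprodI

namespace Monoid.Coprod

universe u

variable {M N : Type u} [Group M] [Group N]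

instance instGroupCond : ∀ b : Bool, Group (cond b M N)
  | true => ‹Group M›
  | false => ‹Group N›

def toCoprodI : M ∗ N →* CoprodI fun b => cond b M N :=
  lift (CoprodI.of (M := fun b => cond b M N) (i := true))
    (CoprodI.of (M := fun b => cond b M N) (i := false))

def liftCond {P : Type*} [Monoid P] (f : M →* P) (g : N →* P) : ∀ b, cond b M N →* P
  | true => f
  | false => g

theorem lift_liftCond_comp_toCoprodI {P : Type*} [Monoid P] (f : M →* P) (g : N →* P) :
    (CoprodI.lift (liftCond f g)).comp toCoprodI = lift f g := by
  ext <;> simp [toCoprodI, liftCond]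

theorem toCoprodI_injective : Injective (toCoprodI : M ∗ N →* _) := by
  refine LeftInverse.injective (g := CoprodI.lift (liftCond inl inr)) fun x => ?_
  rw [← MonoidHom.comp_apply, lift_liftCond_comp_toCoprodI, lift_inl_inr, MonoidHom.id_apply]

theorem isTorsionFree_ker_lift {H : Type*} [Group H] {f : M →* H} {g : N →* H}
    (hf : Injective f) (hg : Injective g) : IsTorsionFree (lift f g).ker := by
  have hI := CoprodI.isTorsionFree_ker_lift (f := liftCond f g) (by rintro (_ | _) <;> assumption)
  rw [MonoidHom.isTorsionFree_ker_iff] at hI ⊢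
  intro x hx hfin
  refine toCoprodI_injective (hI _ ?_ (toCoprodI.isOfFinOrder hfin) |>.trans (map_one _).symm)
  rwa [← MonoidHom.comp_apply, lift_liftCond_comp_toCoprodI]

end Monoid.Coprod

def zmodTwoHom {H : Type*} [Group H] (t : H) (ht : t * t = 1) : Multiplicative (ZMod 2) →* H where
  toFun k := t ^ k.toAdd.val
  map_one' := pow_zero t
  map_mul' x y := by
    change t ^ (x.toAdd + y.toAdd).val = t ^ x.toAdd.val * t ^ y.toAdd.val
    rw [ZMod.val_add, ← pow_eq_pow_mod _ (by rwa [pow_two]), pow_add]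

@[simp]
theorem zmodTwoHom_ofAdd_one {H : Type*} [Group H] (t : H) (ht : t * t = 1) :
    zmodTwoHom t ht (.ofAdd 1) = t :=
  pow_one t

theorem zmodTwoHom_injective {H : Type*} [Group H] {t : H} (ht : t * t = 1) (h1 : t ≠ 1) :
    Injective (zmodTwoHom t ht) := by
  rw [injective_iff_map_eq_one]
  intro x hx
  induction x using Multiplicative.rec with | _ x
  obtain rfl | rfl : x = 0 ∨ x = 1 := by clear hx; revert x; decide
  · rfl
  · exact absurd ((zmodTwoHom_ofAdd_one t ht).symm.trans hx) h1

theorem DihedralGroup.closure_sr_zero_sr_one (n : ℕ) :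
    Subgroup.closure {sr (0 : ZMod n), sr 1} = ⊤ := by
  refine eq_top_iff.2 fun d _ => ?_
  have hr (j : ZMod n) : r j ∈ Subgroup.closure {sr (0 : ZMod n), sr 1} := by
    have : r j = (sr 0 * sr 1) ^ (j.cast : ℤ) := by
      rw [sr_mul_sr, sub_zero, r_one_zpow, ZMod.intCast_zmod_cast]
    rw [this]
    exact Subgroup.zpow_mem _ (Subgroup.mul_mem _ (Subgroup.subset_closure (by simp))
      (Subgroup.subset_closure (by simp))) _
  rcases d with j | j
  · exact hr j
  · rw [← zero_add j, ← sr_mul_r]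
    exact Subgroup.mul_mem _ (Subgroup.subset_closure (by simp)) (hr j)

def kleinHom (m : ℕ) : DihedralGroup 2 →* Multiplicative (ZMod 2) × DihedralGroup m where
  toFun
    | r k => (.ofAdd k, 1)
    | sr k => (.ofAdd k, sr 1)
  map_one' := rfl
  map_mul' a b := by
    have hsub (k l : ZMod 2) : k - l = l + k := by revert k l; decide
    rcases a with k | k <;> rcases b with l | l <;>
      simp [r_mul_r, r_mul_sr, sr_mul_r, sr_mul_sr, hsub, ← ofAdd_add]

@[simp]
theorem kleinHom_r (m : ℕ) (k : ZMod 2) : kleinHom m (r k) = (.ofAdd k, 1) := rfl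

@[simp]
theorem kleinHom_sr (m : ℕ) (k : ZMod 2) : kleinHom m (sr k) = (.ofAdd k, sr 1) := rfl

theorem kleinHom_injective (m : ℕ) : Injective (kleinHom m) := by
  rw [injective_iff_map_eq_one]
  rintro (k | k) h
  · have hk : Multiplicative.ofAdd k = 1 := congrArg Prod.fst h
    rw [ofAdd_eq_one.1 hk, r_zero]
  · have h1 : (sr 1 : DihedralGroup m) = 1 := congrArg Prod.snd h
    exact absurd h1 (by rw [one_def]; nofun)

def coprodToProdDihedral (m : ℕ) :
    Coprod (Multiplicative (ZMod 2)) (DihedralGroup 2) →*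
      Multiplicative (ZMod 2) × DihedralGroup m :=
  Coprod.lift ((MonoidHom.inr _ _).comp (zmodTwoHom (sr 0) (sr_mul_self 0))) (kleinHom m)

theorem coprodToProdDihedral_surjective (m : ℕ) : Surjective (coprodToProdDihedral m) := by
  rw [← MonoidHom.range_eq_top, eq_top_iff]
  rintro ⟨c, d⟩ -
  have hd : (1, d) ∈ (coprodToProdDihedral m).range := by
    have : Subgroup.closure {sr (0 : ZMod m), sr 1} ≤
        (coprodToProdDihedral m).range.comap (MonoidHom.inr _ _) := by
      rw [Subgroup.closure_le]
      rintro _ (rfl | rfl)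
      · exact ⟨Coprod.inl (.ofAdd 1), by simp [coprodToProdDihedral]⟩
      · exact ⟨Coprod.inr (sr 0), by simp [coprodToProdDihedral]⟩
    exact this (closure_sr_zero_sr_one m ▸ Subgroup.mem_top d)
  have hcd : (c, d) = coprodToProdDihedral m (Coprod.inr (r c.toAdd)) * (1, d) := by
    simp [coprodToProdDihedral]
  rw [hcd]
  exact mul_mem ⟨_, rfl⟩ hd

theorem stmt_15_general (m : ℕ) :
    ∃ φ : Coprod (Multiplicative (ZMod 2)) (DihedralGroup 2) →*
        Multiplicative (ZMod 2) × DihedralGroup m,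
      Function.Surjective φ ∧ Monoid.IsTorsionFree φ.ker := by
  refine ⟨coprodToProdDihedral m, coprodToProdDihedral_surjective m,
    Coprod.isTorsionFree_ker_lift ((Prod.mk_right_injective 1).comp ?_) (kleinHom_injective m)⟩
  exact zmodTwoHom_injective _ (by rw [one_def]; nofun)

theorem stmt_15 (m : ℕ) (hm : 1 < m) :
    ∃ φ : Coprod (Multiplicative (ZMod 2)) (DihedralGroup 2) →*
        Multiplicative (ZMod 2) × DihedralGroup m,
      Function.Surjective φ ∧ Monoid.IsTorsionFree φ.ker :=
  stmt_15_general m
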